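/- Let k ∈ {3, 4, 6, 8, 12, 24} and let m > 2 be an odd integer not divisible by 3. Then the integer N = k·m is monomially reducible (i.e., there is no monomially irreducible integer of the form k·m with such k and m). -/
import Mathlib


namespace Monomial

/-- The elementary matrix `[[a, -1], [1, 0]]` over `ZMod N`. -/
def mat {N : ℕ} (a : ZMod N) : Matrix (Fin 2) (Fin 2) (ZMod N) := !![a, -1; 1, 0]

/-- `M [a₁, …, aₙ] = mat aₙ * ⋯ * mat a₁`. -/
def M {N : ℕ} (l : List (ZMod N)) : Matrix (Fin 2) (Fin 2) (ZMod N) :=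
  (l.reverse.map mat).prod

/-- A tuple is a solution of (E_N) if the associated matrix is `±Id`. -/
def IsSolution {N : ℕ} (l : List (ZMod N)) : Prop := M l = 1 ∨ M l = -1

/-- The sum `(a₁,…,aₙ) ⊕ (b₁,…,bₘ) = (a₁+bₘ, a₂,…,aₙ₋₁, aₙ+b₁, b₂,…,bₘ₋₁)`. -/
def osum {N : ℕ} (u v : List (ZMod N)) : List (ZMod N) :=
  (u.headI + v.getLastD 0) ::
    ((u.drop 1).dropLast ++ (u.getLastD 0 + v.headI) :: (v.drop 1).dropLast)

/-- Equivalence: `v` is a cyclic permutation of `u` or of the reversal of `u`. -/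
def CyclicEquiv {N : ℕ} (u v : List (ZMod N)) : Prop :=
  (∃ i, v = u.rotate i) ∨ (∃ i, v = u.reverse.rotate i)

/-- A tuple is reducible if, up to equivalence, it is a sum of an `m`-tuple (`m ≥ 3`)
with a solution of size `l ≥ 3`. -/
def Reducible {N : ℕ} (c : List (ZMod N)) : Prop :=
  ∃ a b : List (ZMod N), 3 ≤ a.length ∧ 3 ≤ b.length ∧ IsSolution b ∧
    CyclicEquiv c (osum a b)

/-- An irreducible solution: a solution which is not reducible (and `(0,0)` is
not considered irreducible). -/
def IrreducibleSol {N : ℕ} (c : List (ZMod N)) : Prop :=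
  IsSolution c ∧ ¬ Reducible c ∧ c ≠ [0, 0]

/-- The size of the `k`-monomial minimal solution of (E_N): the least `n > 0` such
that the constant `n`-tuple `(k, …, k)` is a solution. -/
noncomputable def monomialMinimalSize (N : ℕ) (k : ZMod N) : ℕ :=
  sInf {n | 0 < n ∧ IsSolution (List.replicate n k)}

/-- `N` is monomially irreducible if, for every `k ≠ 0`, the `k`-monomial minimal
solution of (E_N) is irreducible. -/
def MonomiallyIrreducible (N : ℕ) : Prop :=
  ∀ k : ZMod N, k ≠ 0 → IrreducibleSol (List.replicate (monomialMinimalSize N k) k)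

/-- The continuant `Kₙ(x, …, x)` at a constant tuple: `K₀ = 1`, `K₁ = x`,
`Kₙ₊₂ = x * Kₙ₊₁ - Kₙ`. -/
def K {N : ℕ} (x : ZMod N) : ℕ → ZMod N
  | 0 => 1
  | 1 => x
  | n + 2 => x * K x (n + 1) - K x n

section Aux

variable {N : ℕ}

lemma M_append (u v : List (ZMod N)) : M (u ++ v) = M v * M u := by
  simp [M, List.reverse_append]

lemma M_replicate (x : ZMod N) (n : ℕ) : M (List.replicate n x) = (mat x) ^ n := by
  simp [M, List.prod_replicate]

lemma getLastD_concat' (l : List (ZMod N)) (a d : ZMod N) : (l ++ [a]).getLastD d = a := by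
  simp

lemma M_singleton (a : ZMod N) : M [a] = mat a := by simp [M]

lemma K_zero (x : ZMod N) : K x 0 = 1 := rfl
lemma K_one' (x : ZMod N) : K x 1 = x := rfl
lemma K_add_two (x : ZMod N) (n : ℕ) : K x (n+2) = x * K x (n+1) - K x n := rfl

lemma pow_mat (x : ZMod N) (n : ℕ) :
    (mat x) ^ (n+2) = !![K x (n+2), -K x (n+1); K x (n+1), -K x n] := by
  induction n with
  | zero =>
    rw [pow_two]
    ext i j
    fin_cases i <;> fin_cases j <;>
      simp [mat, Matrix.mul_apply, Fin.sum_univ_two, K_zero, K_one', K_add_two] <;> ring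
  | succ n ih =>
    rw [pow_succ, ih]
    ext i j
    fin_cases i <;> fin_cases j <;>
      simp [mat, Matrix.mul_apply, Fin.sum_univ_two, K_add_two] <;> ring

lemma pow_mat_e10 (x : ZMod N) (n : ℕ) : ((mat x) ^ (n+1)) 1 0 = K x n := by
  cases n with
  | zero => simp [mat, K_zero]
  | succ n => rw [pow_mat]; simp

lemma pow_mat_e00 (x : ZMod N) (n : ℕ) : ((mat x) ^ (n+1)) 0 0 = K x (n+1) := by
  cases n with
  | zero => simp [mat, K_one']
  | succ n => rw [pow_mat]; simp

lemma K_det (x : ZMod N) (n : ℕ) :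
    K x (n+1) * K x (n+1) - K x (n+2) * K x n = 1 := by
  induction n with
  | zero => simp [K_zero, K_one', K_add_two]
  | succ n ih =>
    rw [K_add_two x (n+1)]
    rw [K_add_two x n] at *
    linear_combination ih

lemma key (x : ZMod N) (j : ℕ) (h : K x (j+2) = -1) :
    mat (-(K x (j+1))) * ((mat x) ^ (j+2) * mat (-(K x (j+1)))) = 1 := by
  have hd := K_det x j
  rw [h] at hd
  rw [pow_mat, h]
  ext i j'
  fin_cases i <;> fin_cases j' <;>
    simp [mat, Matrix.mul_apply, Fin.sum_univ_two, Matrix.one_apply] <;>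
    linear_combination hd

lemma K_map {p : ℕ} (f : ZMod N →+* ZMod p) (x : ZMod N) : ∀ n, f (K x n) = K (f x) n := by
  intro n
  induction n using Nat.strong_induction_on with
  | _ n ih =>
    match n with
    | 0 => simp [K_zero]
    | 1 => simp [K_one']
    | (n+2) =>
      rw [K_add_two, K_add_two, map_sub, map_mul, ih (n+1) (by omega), ih n (by omega)]

lemma mat_map {p : ℕ} (f : ZMod N →+* ZMod p) (x : ZMod N) :
    f.mapMatrix (mat x) = mat (f x) := by
  ext i j
  fin_cases i <;> fin_cases j <;> simp [mat, RingHom.mapMatrix_apply]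

lemma K_two (n : ℕ) : K (2 : ZMod N) n = ((n + 1 : ℕ) : ZMod N) := by
  induction n using Nat.strong_induction_on with
  | _ n ih =>
    match n with
    | 0 => simp [K_zero]
    | 1 => simp [K_one']
    | (n+2) =>
      rw [K_add_two, ih (n+1) (by omega), ih n (by omega)]
      push_cast
      ring

lemma K_one_two : K (1 : ZMod N) 2 = 0 := by rw [K_add_two, K_one', K_zero]; ring
lemma K_one_three : K (1 : ZMod N) 3 = -1 := by
  rw [show (3:ℕ) = 1+2 from rfl, K_add_two, K_one_two, K_one']; ring

lemma mat_one_pow_three : (mat (1 : ZMod N)) ^ 3 = -1 := by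
  rw [show (3:ℕ) = 1+2 from rfl, pow_mat, K_one_three, K_one_two, K_one']
  ext i j
  fin_cases i <;> fin_cases j <;> simp [Matrix.one_apply]

lemma mat_one_pow_six : (mat (1 : ZMod N)) ^ 6 = 1 := by
  rw [show (6:ℕ) = 3*2 from rfl, pow_mul, mat_one_pow_three]
  simp

lemma K_one_period (n : ℕ) : K (1 : ZMod N) (n + 6) = K 1 n := by
  have h : (mat (1:ZMod N)) ^ (n + 6 + 2) = (mat 1) ^ (n+2) := by
    rw [show n + 6 + 2 = (n + 2) + 6 by omega, pow_add, mat_one_pow_six, mul_one]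
  rw [pow_mat, pow_mat] at h
  have h2 := congrArg (fun A => A 1 1) h
  simpa using h2

lemma K_one_6q3 (q : ℕ) : K (1 : ZMod N) (6*q + 3) = -1 := by
  induction q with
  | zero => simpa using K_one_three
  | succ q ih => rw [show 6*(q+1)+3 = (6*q+3) + 6 by ring, K_one_period, ih]

lemma order_six (hp : 3 ≤ N) {n : ℕ} (h : (mat (1 : ZMod N)) ^ n = 1) : 6 ∣ n := by
  haveI : Fact (1 < N) := ⟨by omega⟩
  have h6 : (mat (1 : ZMod N)) ^ 6 = 1 := mat_one_pow_six
  have h2 : (mat (1 : ZMod N)) ^ 2 ≠ 1 := by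
    intro hh
    have hh2 : (mat (1 : ZMod N)) ^ (0+2) = 1 := by simpa using hh
    rw [pow_mat] at hh2
    have := congrArg (fun A => A 0 0) hh2
    simp [K_add_two, K_one', K_zero, Matrix.one_apply] at this
  have h3 : (mat (1 : ZMod N)) ^ 3 ≠ 1 := by
    rw [mat_one_pow_three]
    intro hh
    have := congrArg (fun A => A 0 0) hh
    simp [Matrix.one_apply] at this
    have h20 : ((2:ℕ) : ZMod N) = 0 := by push_cast; linear_combination -this
    rw [ZMod.natCast_eq_zero_iff] at h20
    have := Nat.le_of_dvd (by norm_num) h20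
    omega
  set d := orderOf (mat (1 : ZMod N)) with hd
  clear_value d
  have hdvd : d ∣ 6 := hd ▸ orderOf_dvd_of_pow_eq_one h6
  have hpow : (mat (1:ZMod N)) ^ d = 1 := hd ▸ pow_orderOf_eq_one _
  have hcases : d = 1 ∨ d = 2 ∨ d = 3 ∨ d = 6 := by
    have := Nat.le_of_dvd (by norm_num) hdvd
    interval_cases d <;> revert hdvd <;> decide
  have hd6 : d = 6 := by
    rcases hcases with rfl|rfl|rfl|rfl
    · rw [pow_one] at hpow
      exact absurd (by rw [hpow, one_pow]) h2
    · exact absurd hpow h2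
    · exact absurd hpow h3
    · rfl
  rw [← hd6, hd]
  exact orderOf_dvd_of_pow_eq_one h

end Aux

theorem stmt18 (k m : ℕ) (hk : k ∈ ({3, 4, 6, 8, 12, 24} : Set ℕ))
    (hm : 2 < m) (hmo : Odd m) (hm3 : ¬ (3 ∣ m)) :
    ¬ MonomiallyIrreducible (k * m) := by
  -- basic numeric facts
  have hk24 : k ∣ 24 := by
    simp only [Set.mem_insert_iff, Set.mem_singleton_iff] at hk
    rcases hk with rfl|rfl|rfl|rfl|rfl|rfl <;> norm_num
  have hk3 : 3 ≤ k := by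
    simp only [Set.mem_insert_iff, Set.mem_singleton_iff] at hk
    rcases hk with rfl|rfl|rfl|rfl|rfl|rfl <;> norm_num
  have hm2 : m % 2 = 1 := Nat.odd_iff.mp hmo
  have hm3' : m % 3 ≠ 0 := fun h => hm3 (Nat.dvd_of_mod_eq_zero h)
  have hc2 : Nat.Coprime 2 m := by
    unfold Nat.Coprime
    rw [Nat.gcd_rec, hm2]
    rfl
  have hc3 : Nat.Coprime 3 m := by
    unfold Nat.Coprime
    rw [Nat.gcd_rec]
    have h3 : m % 3 = 1 ∨ m % 3 = 2 := by omega
    rcases h3 with h|h <;> rw [h] <;> rfl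
  have hc6 : Nat.Coprime 6 m := by
    have := Nat.Coprime.mul hc2 hc3
    simpa using this
  have hc24 : Nat.Coprime 24 m := by
    have := Nat.Coprime.mul hc2 (Nat.Coprime.mul hc2 hc6)
    simpa using this
  have hckm : Nat.Coprime k m := Nat.Coprime.coprime_dvd_left hk24 hc24
  haveI : NeZero (k * m) := ⟨by positivity⟩
  haveI : Fact (1 < k) := ⟨by omega⟩
  haveI : Fact (1 < m) := ⟨by omega⟩
  -- the two projections
  set f1 : ZMod (k*m) →+* ZMod k := ZMod.castHom (dvd_mul_right k m) (ZMod k) with hf1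
  set f2 : ZMod (k*m) →+* ZMod m := ZMod.castHom (dvd_mul_left m k) (ZMod m) with hf2
  have hinj : ∀ z : ZMod (k*m), f1 z = 0 → f2 z = 0 → z = 0 := by
    intro z h1 h2
    have hz : ((z.val : ℕ) : ZMod (k*m)) = z := ZMod.natCast_zmod_val z
    rw [← hz] at h1 h2 ⊢
    rw [map_natCast] at h1 h2
    rw [ZMod.natCast_eq_zero_iff] at h1 h2 ⊢
    exact hckm.mul_dvd_of_dvd_of_dvd h1 h2
  -- existence of x with f1 x = 1, f2 x = 2
  have hFsurj : Function.Surjective (f1.prod f2) := by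
    have hFinj : Function.Injective (f1.prod f2) := by
      intro a b hab
      simp only [RingHom.prod_apply, Prod.mk.injEq] at hab
      have h1 : f1 (a - b) = 0 := by rw [map_sub, sub_eq_zero]; exact hab.1
      have h2 : f2 (a - b) = 0 := by rw [map_sub, sub_eq_zero]; exact hab.2
      have := hinj _ h1 h2
      rwa [sub_eq_zero] at this
    have hcard : Fintype.card (ZMod (k*m)) = Fintype.card (ZMod k × ZMod m) := by
      rw [Fintype.card_prod, ZMod.card, ZMod.card, ZMod.card]
    exact ((Fintype.bijective_iff_injective_and_card _).mpr ⟨hFinj, hcard⟩).2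
  obtain ⟨x, hx⟩ := hFsurj (1, 2)
  rw [RingHom.prod_apply, Prod.mk.injEq] at hx
  obtain ⟨hx1, hx2⟩ := hx
  have hx0 : x ≠ 0 := by
    intro h
    rw [h, map_zero] at hx1
    exact zero_ne_one hx1
  -- matrix-level injectivity
  have hMinj : ∀ A : Matrix (Fin 2) (Fin 2) (ZMod (k*m)),
      f1.mapMatrix A = 1 → f2.mapMatrix A = 1 → A = 1 := by
    intro A h1 h2
    ext i j
    have e1 : f1 (A i j) = (1 : Matrix (Fin 2) (Fin 2) (ZMod k)) i j := by
      rw [← h1]; rfl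
    have e2 : f2 (A i j) = (1 : Matrix (Fin 2) (Fin 2) (ZMod m)) i j := by
      rw [← h2]; rfl
    have h1' : f1 (A i j - (1 : Matrix (Fin 2) (Fin 2) (ZMod (k*m))) i j) = 0 := by
      rw [map_sub, e1, sub_eq_zero]
      by_cases h : i = j <;> simp [Matrix.one_apply, h]
    have h2' : f2 (A i j - (1 : Matrix (Fin 2) (Fin 2) (ZMod (k*m))) i j) = 0 := by
      rw [map_sub, e2, sub_eq_zero]
      by_cases h : i = j <;> simp [Matrix.one_apply, h]
    have := hinj _ h1' h2'
    rwa [sub_eq_zero] at this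
  -- choice of c and the index J
  set c : ℕ := if m % 6 = 1 then 5 else 1 with hc
  have hm6 : m % 6 = 1 ∨ m % 6 = 5 := by omega
  have hcm : c * m % 6 = 5 ∧ 1 ≤ c ∧ c ≤ 5 := by
    rcases hm6 with h|h <;> simp only [hc, h] <;> norm_num <;> omega
  obtain ⟨q, hq⟩ : ∃ q, c * m = 6*q + 5 := ⟨(c*m)/6, by omega⟩
  set jj : ℕ := 6*q + 1 with hjj
  set J : ℕ := jj + 2 with hJdef
  have hJ : J = 6*q + 3 := by omega
  have hJcm : J + 2 = c * m := by omega
  have hJle : J + 2 ≤ 5 * m := by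
    have : c * m ≤ 5 * m := Nat.mul_le_mul_right m hcm.2.2
    omega
  have hJ3 : 3 ≤ J := by omega
  -- the key continuant value
  have hKJ : K x J = -1 := by
    have e1 : f1 (K x J) = -1 := by
      rw [K_map, hx1, hJ, K_one_6q3]
    have e2 : f2 (K x J) = -1 := by
      rw [K_map, hx2, K_two]
      have h1 : ((J + 1 : ℕ) : ZMod m) + 1 = ((c * m : ℕ) : ZMod m) := by
        rw [← hJcm]; push_cast; ring
      rw [Nat.cast_mul, ZMod.natCast_self, mul_zero] at h1
      exact eq_neg_of_add_eq_zero_left h1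
    have h0 : f1 (K x J + 1) = 0 := by rw [map_add, e1, map_one]; ring
    have h0' : f2 (K x J + 1) = 0 := by rw [map_add, e2, map_one]; ring
    have := hinj _ h0 h0'
    exact eq_neg_of_add_eq_zero_left this
  -- the minimal size is 6*m
  have hmem : 0 < 6*m ∧ IsSolution (List.replicate (6*m) x) := by
    refine ⟨by omega, Or.inl ?_⟩
    rw [M_replicate]
    apply hMinj
    · rw [map_pow, mat_map, hx1, pow_mul, mat_one_pow_six, one_pow]
    · rw [map_pow, mat_map, hx2]
      rw [show 6*m = (6*m - 2) + 2 by omega, pow_mat, K_two, K_two, K_two]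
      have c1 : ((6*m - 2 + 2 + 1 : ℕ) : ZMod m) = 1 := by
        rw [show 6*m - 2 + 2 + 1 = 6*m + 1 by omega]
        push_cast; simp
      have c2 : ((6*m - 2 + 1 + 1 : ℕ) : ZMod m) = 0 := by
        rw [show 6*m - 2 + 1 + 1 = 6*m by omega]
        push_cast; simp
      have c3 : ((6*m - 2 + 1 : ℕ) : ZMod m) = -1 := by
        rw [show 6*m - 2 + 1 = 6*m - 1 by omega]
        push_cast [Nat.cast_sub (by omega : 1 ≤ 6*m)]
        simp
      rw [c1, c2, c3]
      ext i j
      fin_cases i <;> fin_cases j <;> simp [Matrix.one_apply]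
  have hlb : ∀ n, 0 < n → IsSolution (List.replicate n x) → 6*m ∣ n := by
    intro n hn hsol
    simp only [IsSolution, M_replicate] at hsol
    obtain ⟨n', rfl⟩ : ∃ n', n = n'+1 := ⟨n-1, by omega⟩
    have hmdvd : m ∣ n' + 1 := by
      have h10 : ((mat (2 : ZMod m)) ^ (n'+1)) 1 0 = 0 := by
        rcases hsol with h|h
        · have := congrArg (fun A => (f2.mapMatrix A) 1 0) h
          simp only [map_pow, mat_map, hx2, map_one] at this
          rw [this]
          simp [Matrix.one_apply]
        · have := congrArg (fun A => (f2.mapMatrix A) 1 0) h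
          simp only [map_pow, mat_map, hx2, map_neg, map_one] at this
          rw [this]
          simp [Matrix.one_apply]
      rw [pow_mat_e10, K_two] at h10
      rw [← ZMod.natCast_eq_zero_iff]
      exact h10
    have hsol1 : (mat x) ^ (n'+1) = 1 := by
      rcases hsol with h|h
      · exact h
      · exfalso
        have h00 : ((mat (2 : ZMod m)) ^ (n'+1)) 0 0 = -1 := by
          have := congrArg (fun A => (f2.mapMatrix A) 0 0) h
          simp only [map_pow, mat_map, hx2, map_neg, map_one] at this
          rw [this]
          simp [Matrix.one_apply]
        rw [pow_mat_e00, K_two] at h00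
        have h1 : ((n' + 1 + 1 : ℕ) : ZMod m) = ((n'+1 : ℕ) : ZMod m) + 1 := by
          push_cast; ring
        have h2 : ((n'+1 : ℕ) : ZMod m) = 0 := by
          rw [ZMod.natCast_eq_zero_iff]; exact hmdvd
        rw [h1, h2, zero_add] at h00
        have h20 : ((2:ℕ) : ZMod m) = 0 := by push_cast; linear_combination h00
        rw [ZMod.natCast_eq_zero_iff] at h20
        have := Nat.le_of_dvd (by norm_num) h20
        omega
    have h6dvd : 6 ∣ n' + 1 := by
      apply order_six hk3
      have := congrArg (fun A => f1.mapMatrix A) hsol1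
      simpa only [map_pow, mat_map, hx1, map_one] using this
    exact hc6.mul_dvd_of_dvd_of_dvd h6dvd hmdvd
  have hsize : monomialMinimalSize (k*m) x = 6*m := by
    apply le_antisymm
    · exact Nat.sInf_le hmem
    · have hne : {n | 0 < n ∧ IsSolution (List.replicate n x)}.Nonempty := ⟨6*m, hmem⟩
      have hmm2 := Nat.sInf_mem hne
      exact Nat.le_of_dvd hmm2.1 (hlb _ hmm2.1 hmm2.2)
  -- the reduction
  set bv : ZMod (k*m) := -(K x (jj+1)) with hbv
  set blist : List (ZMod (k*m)) := (bv :: List.replicate J x) ++ [bv] with hbl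
  set alist : List (ZMod (k*m)) :=
    ((x - bv) :: List.replicate (6*m - J - 2) x) ++ [x - bv] with hal
  have hlen_b : blist.length = J + 2 := by simp [hbl]
  have hlen_a : alist.length = (6*m - J - 2) + 2 := by simp [hal]
  have hsolb : IsSolution blist := by
    left
    rw [hbl, M_append, show bv :: List.replicate J x = [bv] ++ List.replicate J x from rfl,
      M_append, M_replicate, M_singleton]
    exact key x jj hKJ
  have hosum : osum alist blist = List.replicate (6*m) x := by
    have e1 : alist.headI = x - bv := by simp [hal]
    have e2 : blist.getLastD 0 = bv := by rw [hbl]; exact getLastD_concat' _ _ _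
    have e3 : (alist.drop 1).dropLast = List.replicate (6*m - J - 2) x := by
      simp [hal, List.dropLast_concat]
    have e4 : alist.getLastD 0 = x - bv := by rw [hal]; exact getLastD_concat' _ _ _
    have e5 : blist.headI = bv := by simp [hbl]
    have e6 : (blist.drop 1).dropLast = List.replicate J x := by
      simp [hbl, List.dropLast_concat]
    rw [osum, e1, e2, e3, e4, e5, e6]
    have hx' : x - bv + bv = x := by ring
    rw [hx']
    rw [show (x :: List.replicate J x : List (ZMod (k*m))) = List.replicate (J+1) x from rfl]
    rw [← List.replicate_add, ← List.replicate_succ]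
    rw [show (6*m - J - 2) + (J+1) + 1 = 6*m by omega]
  intro hMI
  obtain ⟨hsol, hnred, hne⟩ := hMI x hx0
  rw [hsize] at hnred
  exact hnred ⟨alist, blist, by omega, by omega, hsolb,
    Or.inl ⟨0, by rw [List.rotate_zero, hosum]⟩⟩

end Monomial
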